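/- Let n ≥ 1 and s ∈ ℝ. For every ε > 0 there exists R > 0 such that for every C¹ function u : ℝⁿ → ℝ with compact support contained in {x ∈ ℝⁿ : ‖x‖ > R}, one has ∫ e^{−2s‖x‖} |∇u|² dx ≥ (s² − ε) ∫ e^{−2s‖x‖} u² dx. -/

import Mathlib

open MeasureTheory Real

/-- The `i`-th partial derivative of a function on `ℝⁿ`. -/
noncomputable def pd (n : ℕ) (f : EuclideanSpace ℝ (Fin n) → ℝ)
    (i : Fin n) (x : EuclideanSpace ℝ (Fin n)) : ℝ :=
  fderiv ℝ f x (EuclideanSpace.single i 1)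

/-- The squared Euclidean norm of the gradient, `|∇f|² = Σᵢ (∂ᵢf)²`. -/
noncomputable def gradSq (n : ℕ) (f : EuclideanSpace ℝ (Fin n) → ℝ)
    (x : EuclideanSpace ℝ (Fin n)) : ℝ :=
  ∑ i, (pd n f i x) ^ 2

/-- The Euclidean Laplacian, `Δf = Σᵢ ∂ᵢ²f`. -/
noncomputable def lap (n : ℕ) (f : EuclideanSpace ℝ (Fin n) → ℝ)
    (x : EuclideanSpace ℝ (Fin n)) : ℝ :=
  ∑ i, pd n (pd n f i) i x

/-!
Write `w = e^{-2s‖x‖}`, `r = ‖x‖` and `φ = u² w / r` (`radialFlux s u`). The radial vector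
field `φ(x) x` has divergence `Dφ(x) x + n φ`, whose integral vanishes. Expanding this divergence
and using `|∂ᵣu| ≤ |∇u|` gives, pointwise,
`w |∇u|² - s (Dφ(x) x + n φ) ≥ w (∂ᵣu - s u)² + s² u² w - s (n - 1) u² w / r`,
and the last term is at most `ε u² w` as soon as `r > |s (n - 1)| / ε`.
-/

open Module

section Euler

variable {E : Type*} [NormedAddCommGroup E] [NormedSpace ℝ E] [MeasurableSpace E] [BorelSpace E]
  {μ : Measure E} [μ.IsAddHaarMeasure] {φ : E → ℝ}

theorem integrable_fderiv_apply_self (hφ : ContDiff ℝ 1 φ) (hc : HasCompactSupport φ) :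
    Integrable (fun x ↦ fderiv ℝ φ x x) μ :=
  ((hφ.continuous_fderiv one_ne_zero).clm_apply continuous_id).integrable_of_hasCompactSupport
    (hc.mono' fun _ hx ↦ support_fderiv_subset ℝ fun h ↦ hx (by simp [h]))

variable [FiniteDimensional ℝ E]

/-- The infinitesimal form of `∫ φ (t • x) ∂μ = t ^ (-d) * ∫ φ ∂μ`; proved by integrating by
parts along each vector of a basis. -/
theorem integral_fderiv_apply_self (hφ : ContDiff ℝ 1 φ) (hc : HasCompactSupport φ) :
    ∫ x, fderiv ℝ φ x x ∂μ = -finrank ℝ E * ∫ x, φ x ∂μ := by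
  let b := finBasis ℝ E
  let c : Fin (finrank ℝ E) → E →L[ℝ] ℝ := fun i ↦ LinearMap.toContinuousLinearMap (b.coord i)
  have hint : ∀ i, Integrable (fun x ↦ c i x * fderiv ℝ φ x (b i)) μ := fun i ↦
    ((c i).continuous.mul ((hφ.continuous_fderiv one_ne_zero).clm_apply continuous_const)
      ).integrable_of_hasCompactSupport (hc.fderiv_apply (𝕜 := ℝ) (b i)).mul_left
  have hsplit : ∀ x, fderiv ℝ φ x x = ∑ i, c i x * fderiv ℝ φ x (b i) := fun x ↦ by
    conv_lhs => arg 2; rw [← b.sum_repr x]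
    simp only [map_sum, map_smul, smul_eq_mul, c, LinearMap.coe_toContinuousLinearMap',
      Basis.coord_apply]
  have hcoord : ∀ i, ∫ x, c i x * fderiv ℝ φ x (b i) ∂μ = -∫ x, φ x ∂μ := fun i ↦ by
    have h := integral_mul_fderiv_eq_neg_fderiv_mul_of_integrable (μ := μ) (f := c i) (g := φ)
      (v := b i) ?_ (hint i) ?_ (fun _ _ ↦ (c i).differentiableAt)
      (fun x _ ↦ hφ.differentiable one_ne_zero x)
    · simp only [ContinuousLinearMap.fderiv] at h
      simpa [c] using h
    · simp only [ContinuousLinearMap.fderiv]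
      simpa [c] using hφ.continuous.integrable_of_hasCompactSupport hc
    · exact ((c i).continuous.mul hφ.continuous).integrable_of_hasCompactSupport hc.mul_left
  rw [integral_congr_ae (Filter.Eventually.of_forall hsplit), integral_finsetSum _ fun i _ ↦ hint i]
  simp [hcoord]

end Euler

theorem ContDiff.mul_of_contDiffAt_of_mem_tsupport {E : Type*} [NormedAddCommGroup E]
    [NormedSpace ℝ E] {k : WithTop ℕ∞} {f g : E → ℝ} (hf : ContDiff ℝ k f)
    (hg : ∀ x ∈ tsupport f, ContDiffAt ℝ k g x) : ContDiff ℝ k (fun x ↦ f x * g x) := by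
  refine contDiff_iff_contDiffAt.2 fun x ↦ ?_
  by_cases hx : x ∈ tsupport f
  · exact hf.contDiffAt.mul (hg x hx)
  · refine contDiffAt_const (c := (0 : ℝ)).congr_of_eventuallyEq ?_
    filter_upwards [notMem_tsupport_iff_eventuallyEq.1 hx] with y hy
    simp [hy]

theorem fderiv_comp_norm_apply_self {E : Type*} [NormedAddCommGroup E] [InnerProductSpace ℝ E]
    {g : ℝ → ℝ} {x : E} (hx : x ≠ 0) (hg : DifferentiableAt ℝ g ‖x‖) :
    fderiv ℝ (fun y ↦ g ‖y‖) x x = ‖x‖ * deriv g ‖x‖ := by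
  have hnorm : DifferentiableAt ℝ (‖·‖) x := (contDiffAt_norm ℝ hx).differentiableAt one_ne_zero
  have h : HasFDerivAt (fun y ↦ g ‖y‖) (deriv g ‖x‖ • fderiv ℝ (‖·‖) x) x :=
    hg.hasDerivAt.comp_hasFDerivAt x hnorm.hasFDerivAt
  simp [h.fderiv, hnorm.fderiv_norm_self, mul_comm]

theorem hasDerivAt_exp_div_self (s : ℝ) {r : ℝ} (hr : r ≠ 0) :
    HasDerivAt (fun t ↦ exp (-2 * s * t) / t)
      ((exp (-2 * s * r) * (-2 * s) * r - exp (-2 * s * r)) / r ^ 2) r := by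
  simpa using ((hasDerivAt_id' r).const_mul (-2 * s)).exp.fun_div (hasDerivAt_id' r) hr

section RadialFlux

variable {E : Type*} [NormedAddCommGroup E] {s : ℝ} {u : E → ℝ}

noncomputable def radialFlux (s : ℝ) (u : E → ℝ) (x : E) : ℝ :=
  u x ^ 2 * (exp (-2 * s * ‖x‖) / ‖x‖)

theorem tsupport_radialFlux_subset : tsupport (radialFlux s u) ⊆ tsupport u :=
  closure_mono fun _ hx ↦ by simpa [radialFlux] using left_ne_zero_of_mul hx

theorem hasCompactSupport_radialFlux (hu : HasCompactSupport u) :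
    HasCompactSupport (radialFlux s u) :=
  hu.of_isClosed_subset (isClosed_tsupport _) tsupport_radialFlux_subset

variable [InnerProductSpace ℝ E]

theorem contDiff_radialFlux (hu : ContDiff ℝ 1 u) (h0 : (0 : E) ∉ tsupport u) :
    ContDiff ℝ 1 (radialFlux s u) := by
  refine (hu.pow 2).mul_of_contDiffAt_of_mem_tsupport fun x hx ↦ ?_
  have hx0 : x ≠ 0 := by
    rintro rfl
    exact h0 (by simpa [tsupport, Function.support_pow] using hx)
  exact (contDiffAt_const.mul (contDiffAt_norm ℝ hx0)).exp.div (contDiffAt_norm ℝ hx0)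
    (norm_ne_zero_iff.2 hx0)

theorem fderiv_radialFlux_apply_self {x : E} (hu : DifferentiableAt ℝ u x) (hx : x ≠ 0) :
    fderiv ℝ (radialFlux s u) x x = 2 * u x * (fderiv ℝ u x x / ‖x‖) * exp (-2 * s * ‖x‖)
      - u x ^ 2 * (2 * s + ‖x‖⁻¹) * exp (-2 * s * ‖x‖) := by
  have hg := hasDerivAt_exp_div_self s (norm_ne_zero_iff.2 hx)
  have hgn : DifferentiableAt ℝ (fun y : E ↦ exp (-2 * s * ‖y‖) / ‖y‖) x :=
    hg.differentiableAt.comp x ((contDiffAt_norm ℝ hx).differentiableAt one_ne_zero)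
  have hrad := fderiv_comp_norm_apply_self hx hg.differentiableAt
  simp only [hg.deriv] at hrad
  unfold radialFlux
  rw [fderiv_fun_mul (hu.fun_pow 2) hgn, fderiv_fun_pow 2 hu, add_apply, smul_apply, smul_apply,
    hrad]
  simp only [smul_apply, smul_eq_mul]
  field_simp
  ring

end RadialFlux

section Euclidean

variable {n : ℕ} {u : EuclideanSpace ℝ (Fin n) → ℝ}

theorem sq_fderiv_apply_le_gradSq_mul_norm_sq (x v : EuclideanSpace ℝ (Fin n)) : fderiv ℝ u x v ^ 2 ≤ gradSq n u x * ‖v‖ ^ 2 := by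
  have hv : fderiv ℝ u x v = ∑ i, pd n u i x * v i := by
    conv_lhs => rw [← (EuclideanSpace.basisFun (Fin n) ℝ).sum_repr v]
    simp only [map_sum, map_smul, smul_eq_mul, EuclideanSpace.basisFun_apply,
      EuclideanSpace.basisFun_repr, pd, mul_comm]
  rw [hv, gradSq, EuclideanSpace.norm_sq_eq]
  simpa using Finset.sum_mul_sq_le_sq_mul_sq Finset.univ (fun i ↦ pd n u i x) (fun i ↦ v i)

theorem integrable_exp_mul_gradSq (s : ℝ) (hu : ContDiff ℝ 1 u) (hc : HasCompactSupport u) :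
    Integrable fun x ↦ exp (-2 * s * ‖x‖) * gradSq n u x := by
  have hcont : Continuous (gradSq n u) := continuous_finsetSum _ fun _ _ ↦
    ((hu.continuous_fderiv one_ne_zero).clm_apply continuous_const).pow 2
  have hsupp : HasCompactSupport (gradSq n u) :=
    hc.mono' fun _ hx ↦ support_fderiv_subset ℝ fun h ↦ hx (by simp [gradSq, pd, h])
  exact ((by fun_prop : Continuous fun x : EuclideanSpace ℝ (Fin n) ↦ exp (-2 * s * ‖x‖)).mul
    hcont).integrable_of_hasCompactSupport hsupp.mul_left

theorem exp_mul_gradSq_lower_bound {s ε R : ℝ} (hu : Differentiable ℝ u) (hR : 0 < R)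
    (hRε : s * (n - 1) ≤ ε * R) (hε : 0 ≤ ε) (hsupp : tsupport u ⊆ {x | R < ‖x‖})
    (x : EuclideanSpace ℝ (Fin n)) :
    (s ^ 2 - ε) * (exp (-2 * s * ‖x‖) * u x ^ 2)
        + s * (fderiv ℝ (radialFlux s u) x x + n * radialFlux s u x)
      ≤ exp (-2 * s * ‖x‖) * gradSq n u x := by
  have he : 0 < exp (-2 * s * ‖x‖) := exp_pos _
  by_cases hx : x ∉ tsupport u
  · have hφ : fderiv ℝ (radialFlux s u) x = 0 :=
      fderiv_of_notMem_tsupport ℝ fun hφ ↦ hx (tsupport_radialFlux_subset hφ)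
    have hgrad : 0 ≤ gradSq n u x := Finset.sum_nonneg fun _ _ ↦ sq_nonneg _
    simpa [hφ, radialFlux, image_eq_zero_of_notMem_tsupport hx] using mul_nonneg he.le hgrad
  rw [not_not] at hx
  have hxR : R < ‖x‖ := hsupp hx
  have hr : 0 < ‖x‖ := hR.trans hxR
  rw [fderiv_radialFlux_apply_self (hu x) (norm_pos_iff.1 hr), radialFlux]
  set r := ‖x‖
  set e := exp (-2 * s * r)
  set a := fderiv ℝ u x x / r
  have hcs : e * a ^ 2 ≤ e * gradSq n u x := by
    refine mul_le_mul_of_nonneg_left ?_ he.le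
    rw [div_pow, div_le_iff₀ (by positivity)]
    exact sq_fderiv_apply_le_gradSq_mul_norm_sq x x
  have hrem : u x ^ 2 * e * (s * (n - 1) / r) ≤ u x ^ 2 * e * ε := by
    refine mul_le_mul_of_nonneg_left ?_ (by positivity)
    rw [div_le_iff₀ hr]
    linarith [mul_le_mul_of_nonneg_left hxR.le hε]
  linear_combination hcs + mul_nonneg he.le (sq_nonneg (a - s * u x)) + hrem

theorem weighted_poincare_of_tsupport_subset {s ε R : ℝ} (hR : 0 < R)
    (hRε : s * (n - 1) ≤ ε * R) (hε : 0 ≤ ε) (hu : ContDiff ℝ 1 u) (hc : HasCompactSupport u)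
    (hsupp : tsupport u ⊆ {x | R < ‖x‖}) :
    (s ^ 2 - ε) * ∫ x, exp (-2 * s * ‖x‖) * u x ^ 2 ≤ ∫ x, exp (-2 * s * ‖x‖) * gradSq n u x := by
  set φ := radialFlux s u
  have hφ : ContDiff ℝ 1 φ := contDiff_radialFlux hu fun h ↦ (hR.trans (hsupp h)).ne' norm_zero
  have hφc : HasCompactSupport φ := hasCompactSupport_radialFlux hc
  have hφi : Integrable φ := hφ.continuous.integrable_of_hasCompactSupport hφc
  have hdiv : Integrable fun x ↦ fderiv ℝ φ x x + n * φ x :=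
    (integrable_fderiv_apply_self hφ hφc).add (hφi.const_mul _)
  have hdiv_zero : ∫ x, (fderiv ℝ φ x x + n * φ x) = 0 := by
    rw [integral_add (integrable_fderiv_apply_self hφ hφc) (hφi.const_mul _), integral_const_mul,
      integral_fderiv_apply_self hφ hφc, finrank_euclideanSpace_fin]
    ring
  have hwu : Integrable fun x ↦ exp (-2 * s * ‖x‖) * u x ^ 2 :=
    ((by fun_prop : Continuous fun x : EuclideanSpace ℝ (Fin n) ↦ exp (-2 * s * ‖x‖)).mul
      (hu.continuous.pow 2)).integrable_of_hasCompactSupport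
      (hc.mono' fun _ hx ↦ subset_tsupport u fun h ↦ hx (by simp [h]))
  calc (s ^ 2 - ε) * ∫ x, exp (-2 * s * ‖x‖) * u x ^ 2
      = ∫ x, ((s ^ 2 - ε) * (exp (-2 * s * ‖x‖) * u x ^ 2)
          + s * (fderiv ℝ φ x x + n * φ x)) := by
        rw [integral_add (hwu.const_mul _) (hdiv.const_mul _), integral_const_mul,
          integral_const_mul, hdiv_zero, mul_zero, add_zero]
    _ ≤ ∫ x, exp (-2 * s * ‖x‖) * gradSq n u x :=
        integral_mono ((hwu.const_mul _).add (hdiv.const_mul _))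
          (integrable_exp_mul_gradSq s hu hc)
          (exp_mul_gradSq_lower_bound (hu.differentiable one_ne_zero) hR hRε hε hsupp)

end Euclidean

theorem weighted_poincare_exp_radial (n : ℕ) (s : ℝ) :
    ∀ ε > (0:ℝ), ∃ R > (0:ℝ),
      ∀ u : EuclideanSpace ℝ (Fin n) → ℝ,
        ContDiff ℝ 1 u → HasCompactSupport u →
        tsupport u ⊆ {x : EuclideanSpace ℝ (Fin n) | R < ‖x‖} →
        ∫ x : EuclideanSpace ℝ (Fin n),
            Real.exp (-2 * s * ‖x‖) * gradSq n u x ≥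
          (s ^ 2 - ε) *
            ∫ x : EuclideanSpace ℝ (Fin n),
              Real.exp (-2 * s * ‖x‖) * (u x) ^ 2 := by
  intro ε hε
  set R := |s * (n - 1)| / ε + 1
  have hR : 0 < R := by positivity
  have hRε : s * (n - 1) ≤ ε * R := by
    rw [mul_add, mul_div_cancel₀ _ hε.ne']
    linarith [le_abs_self (s * (n - 1))]
  exact ⟨R, hR, fun u hu hc hsupp ↦
    weighted_poincare_of_tsupport_subset hR hRε hε.le hu hc hsupp⟩
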